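/- Let n ≥ 1 and let E : [0,1]^n → ℝ^n be the power-sum map E(x) = (Σ_i x_i, Σ_i x_i², …, Σ_i x_iⁿ). Then E is continuous and invariant under permutations of the coordinates, and the induced map from the quotient of [0,1]^n by the action of the symmetric group on coordinates (equivalently, from the space of n-element multisets of points of [0,1]) onto the image E([0,1]^n) ⊆ ℝ^n is a homeomorphism: it is a continuous bijection from a compact space onto a Hausdorff space, hence its inverse is continuous. -/

import Mathlib

/-!
Newton's identities express the elementary symmetric functions of `x₁, …, xₙ` through the
power sums `p₁, …, pₙ` (dividing by `k` at step `k`, so characteristic zero is needed). The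
power sums therefore determine the polynomial `∏ (X - xᵢ)`, hence the multiset of the `xᵢ`,
hence `x` up to a permutation: the induced map on the quotient is injective. It is a
continuous bijection from the compact quotient of the cube onto a subspace of `ℝⁿ`, so it is a
homeomorphism.
-/

/-- The cube `[0,1]^n` inside `ℝ^n`. -/
def unitCube (n : ℕ) : Set (Fin n → ℝ) := {x | ∀ i, x i ∈ Set.Icc (0 : ℝ) 1}

/-- The power-sum map `E x = (∑ i, x i, ∑ i, (x i)², …, ∑ i, (x i)ⁿ)`. -/
def powerSumMap (n : ℕ) (x : Fin n → ℝ) : Fin n → ℝ :=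
  fun k => ∑ i : Fin n, x i ^ ((k : ℕ) + 1)

/-- The setoid on the cube identifying tuples that differ by a permutation of
coordinates; its quotient is the space of `n`-element multisets of points of `[0,1]`. -/
def permSetoid (n : ℕ) : Setoid (unitCube n) where
  r x y := ∃ σ : Equiv.Perm (Fin n), ∀ i, (y : Fin n → ℝ) i = (x : Fin n → ℝ) (σ i)
  iseqv := by
    constructor
    · intro x
      exact ⟨1, fun i => rfl⟩
    · rintro x y ⟨σ, h⟩
      exact ⟨σ⁻¹, fun i => by rw [h (σ⁻¹ i), Equiv.Perm.inv_def, Equiv.apply_symm_apply]⟩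
    · rintro x y z ⟨σ, h⟩ ⟨τ, h'⟩
      exact ⟨σ * τ, fun i => by rw [h' i, h (τ i)]; rfl⟩

open Finset MvPolynomial

theorem MvPolynomial.eval_esymm_eq_of_eval_psum_eq {σ R : Type*} [Fintype σ] [CommRing R]
    [IsDomain R] [CharZero R] {x y : σ → R} {m : ℕ}
    (h : ∀ k ∈ Icc 1 m, eval x (psum σ R k) = eval y (psum σ R k)) :
    ∀ k ≤ m, eval x (esymm σ R k) = eval y (esymm σ R k) := by
  intro k
  induction k using Nat.strong_induction_on with
  | _ k ih =>
    intro hkm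
    rcases Nat.eq_zero_or_pos k with rfl | hk
    · simp only [esymm_zero, map_one]
    have hmul : eval x (k * esymm σ R k) = eval y (k * esymm σ R k) := by
      simp only [mul_esymm_eq_sum, map_mul, map_sum, map_pow, map_neg, map_one]
      congr 1
      refine sum_congr rfl fun a ha => ?_
      rw [mem_filter, HasAntidiagonal.mem_antidiagonal] at ha
      rw [ih a.1 ha.2 (by omega), h a.2 (mem_Icc.2 ⟨by omega, by omega⟩)]
    simpa [hk.ne'] using hmul

theorem Multiset.eq_of_card_eq_of_esymm_eq {R : Type*} [CommRing R] [IsDomain R]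
    {s t : Multiset R} (hcard : card s = card t) (h : ∀ k ≤ card s, s.esymm k = t.esymm k) :
    s = t := by
  have hprod : (s.map fun a => Polynomial.X - Polynomial.C a).prod =
      (t.map fun a => Polynomial.X - Polynomial.C a).prod := by
    rw [prod_X_sub_X_eq_sum_esymm, prod_X_sub_X_eq_sum_esymm, ← hcard]
    exact sum_congr rfl fun k hk => by rw [h k (Nat.lt_succ_iff.1 (mem_range.1 hk))]
  simpa only [Polynomial.roots_multiset_prod_X_sub_C] using congrArg Polynomial.roots hprod

theorem Nat.card_fiber_eq_count_map_univ {ι α : Type*} [Fintype ι] [DecidableEq α]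
    (f : ι → α) (a : α) : Nat.card {i // f i = a} = (univ.val.map f).count a := by
  rw [Multiset.count_map, Nat.card_eq_fintype_card, Fintype.card_subtype, Finset.card,
    Finset.filter_val]
  simp only [eq_comm]

theorem Equiv.Perm.exists_comp_eq_of_map_univ_eq {ι α : Type*} [Fintype ι] {f g : ι → α}
    (h : univ.val.map f = univ.val.map g) : ∃ σ : Perm ι, ∀ i, g i = f (σ i) := by
  classical
  have hfiber (a : α) : Nonempty ({i // g i = a} ≃ {i // f i = a}) := by
    rw [← Finite.card_eq, Nat.card_fiber_eq_count_map_univ, Nat.card_fiber_eq_count_map_univ, h]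
  exact ⟨Equiv.ofFiberEquiv fun a => (hfiber a).some,
    fun i => (Equiv.ofFiberEquiv_map _ i).symm⟩

theorem Equiv.Perm.exists_comp_eq_of_sum_pow_eq {ι R : Type*} [Fintype ι] [CommRing R]
    [IsDomain R] [CharZero R] {x y : ι → R}
    (h : ∀ k ∈ Icc 1 (Fintype.card ι), ∑ i, x i ^ k = ∑ i, y i ^ k) :
    ∃ σ : Perm ι, ∀ i, y i = x (σ i) := by
  have hesymm := eval_esymm_eq_of_eval_psum_eq (x := x) (y := y) (by simpa [psum] using h)
  refine exists_comp_eq_of_map_univ_eq (Multiset.eq_of_card_eq_of_esymm_eq (by simp) ?_)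
  intro k hk
  rw [← aeval_esymm_eq_multiset_esymm ι R, ← aeval_esymm_eq_multiset_esymm ι R, aeval_eq_eval,
    aeval_eq_eval]
  exact hesymm k (by simpa using hk)

theorem powerSumMap_comp_perm (n : ℕ) (x : Fin n → ℝ) (σ : Equiv.Perm (Fin n)) :
    powerSumMap n (x ∘ σ) = powerSumMap n x :=
  funext fun k => Equiv.sum_comp σ fun i => x i ^ ((k : ℕ) + 1)

theorem continuous_powerSumMap (n : ℕ) : Continuous (powerSumMap n) := by
  unfold powerSumMap
  fun_prop

theorem exists_perm_of_powerSumMap_eq {n : ℕ} {x y : Fin n → ℝ}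
    (h : powerSumMap n x = powerSumMap n y) : ∃ σ : Equiv.Perm (Fin n), ∀ i, y i = x (σ i) := by
  refine Equiv.Perm.exists_comp_eq_of_sum_pow_eq fun k hk => ?_
  obtain ⟨hk1, hkn⟩ := mem_Icc.1 hk
  obtain ⟨j, rfl⟩ := Nat.exists_eq_add_of_le' hk1
  exact congrFun h ⟨j, by simpa using hkn⟩

theorem unitCube_eq_Icc (n : ℕ) : unitCube n = Set.Icc 0 1 := by
  ext
  simp [unitCube, Pi.le_def, forall_and]

theorem powerSumMap_induces_homeomorph_general (n : ℕ) :
    Continuous (fun x : unitCube n => powerSumMap n (x : Fin n → ℝ)) ∧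
    (∀ (x : Fin n → ℝ) (σ : Equiv.Perm (Fin n)),
      powerSumMap n (x ∘ σ) = powerSumMap n x) ∧
    ∃ F : Quotient (permSetoid n) →
        Set.range (fun x : unitCube n => powerSumMap n (x : Fin n → ℝ)),
      (∀ x : unitCube n,
        (F (Quotient.mk (permSetoid n) x) : Fin n → ℝ) = powerSumMap n (x : Fin n → ℝ)) ∧
      IsHomeomorph F := by
  set E := fun x : unitCube n => powerSumMap n (x : Fin n → ℝ)
  have hE : Continuous E := (continuous_powerSumMap n).comp continuous_subtype_val
  have hE_perm (x y : unitCube n) (hxy : permSetoid n x y) :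
      Set.rangeFactorization E x = Set.rangeFactorization E y := by
    obtain ⟨σ, hσ⟩ := hxy
    ext1
    simp only [Set.rangeFactorization_coe, E, show (y : Fin n → ℝ) = x ∘ σ from funext hσ,
      powerSumMap_comp_perm]
  let F := Quotient.lift (Set.rangeFactorization E) hE_perm
  have : CompactSpace (unitCube n) :=
    isCompact_iff_compactSpace.1 (unitCube_eq_Icc n ▸ isCompact_Icc)
  refine ⟨hE, powerSumMap_comp_perm n, F, fun _ => rfl,
    isHomeomorph_iff_continuous_bijective.2 ⟨hE.rangeFactorization.quotient_lift _, ?_, ?_⟩⟩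
  · rintro ⟨x⟩ ⟨y⟩ hxy
    exact Quotient.sound (exists_perm_of_powerSumMap_eq (congrArg Subtype.val hxy))
  · rintro ⟨_, x, rfl⟩
    exact ⟨Quotient.mk _ x, rfl⟩

/-- The power-sum map `E : [0,1]^n → ℝ^n` is continuous and invariant
under permutations of the coordinates, and the induced map from the quotient of `[0,1]^n`
by the symmetric-group action onto the image `E([0,1]^n) ⊆ ℝ^n` is a homeomorphism. -/
theorem powerSumMap_induces_homeomorph (n : ℕ) (hn : 1 ≤ n) :
    Continuous (fun x : unitCube n => powerSumMap n (x : Fin n → ℝ)) ∧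
    (∀ (x : Fin n → ℝ) (σ : Equiv.Perm (Fin n)),
      powerSumMap n (x ∘ σ) = powerSumMap n x) ∧
    ∃ F : Quotient (permSetoid n) →
        Set.range (fun x : unitCube n => powerSumMap n (x : Fin n → ℝ)),
      (∀ x : unitCube n,
        (F (Quotient.mk (permSetoid n) x) : Fin n → ℝ) = powerSumMap n (x : Fin n → ℝ)) ∧
      IsHomeomorph F :=
  powerSumMap_induces_homeomorph_general n
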